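/- Define g(ρ) = ρ + (1/π)·( √(1-ρ²) − ρ·arccos ρ ) on [-1,1]. Then (i) for every ρ ∈ [-1,1), √(1-ρ²) − ρ·arccos ρ > 0, and it equals 0 at ρ = 1; (ii) for every ρ ∈ (-1,1), g is differentiable at ρ with g'(ρ) = 1 − arccos(ρ)/π; consequently g is nondecreasing on [-1,1], maps [-1,1] into [-1,1], and ρ = 1 is its unique fixed point in [-1,1]. -/

import Mathlib

open Real

/-- The infinite-width one-step correlation map of a He-initialized ReLU MLP:
`g(ρ) = ρ + (1/π)(√(1-ρ²) − ρ arccos ρ)`. -/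
noncomputable def corrMap (ρ : ℝ) : ℝ :=
  ρ + (1 / π) * (Real.sqrt (1 - ρ ^ 2) - ρ * Real.arccos ρ)

lemma corr_pos : ∀ ρ ∈ Set.Ico (-1 : ℝ) 1, 0 < Real.sqrt (1 - ρ ^ 2) - ρ * Real.arccos ρ := by
  intro ρ hρ
  obtain ⟨h1, h2⟩ := hρ
  have hθpos : 0 < Real.arccos ρ := Real.arccos_pos.2 h2
  have hsq : 0 ≤ 1 - ρ ^ 2 := by nlinarith
  rcases lt_trichotomy ρ 0 with hneg | hzero | hpos
  · have : 0 < -(ρ * Real.arccos ρ) := by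
      rw [neg_mul_eq_neg_mul]; exact mul_pos (by linarith) hθpos
    have := Real.sqrt_nonneg (1 - ρ ^ 2)
    linarith
  · subst hzero; simp
  · have hθlt : Real.arccos ρ < π / 2 := Real.arccos_lt_pi_div_two.2 hpos
    have htan := Real.lt_tan hθpos hθlt
    rw [Real.tan_eq_sin_div_cos, Real.sin_arccos, Real.cos_arccos (by linarith) (by linarith)]
      at htan
    have := (lt_div_iff₀ hpos).1 htan
    linarith [mul_comm ρ (Real.arccos ρ)]

lemma corr_deriv : ∀ ρ ∈ Set.Ioo (-1 : ℝ) 1,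
    HasDerivAt corrMap (1 - Real.arccos ρ / π) ρ := by
  intro ρ hρ
  obtain ⟨h1, h2⟩ := hρ
  have hsq : 0 < 1 - ρ ^ 2 := by nlinarith
  have hs : Real.sqrt (1 - ρ ^ 2) ≠ 0 := by positivity
  have hinner : HasDerivAt (fun x : ℝ => 1 - x ^ 2) (-(2 * ρ ^ 1)) ρ :=
    (hasDerivAt_pow 2 ρ).const_sub 1
  have hsqrt : HasDerivAt (fun x : ℝ => Real.sqrt (1 - x ^ 2))
      (-(2 * ρ ^ 1) / (2 * Real.sqrt (1 - ρ ^ 2))) ρ := hinner.sqrt (by linarith)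
  have harccos := Real.hasDerivAt_arccos h1.ne' h2.ne
  have hmul : HasDerivAt (fun x : ℝ => x * Real.arccos x)
      (1 * Real.arccos ρ + ρ * -(1 / Real.sqrt (1 - ρ ^ 2))) ρ :=
    (hasDerivAt_id ρ).mul harccos
  have h := (hasDerivAt_id ρ).add (((hsqrt.sub hmul)).const_mul (1 / π))
  refine h.congr_deriv ?_
  have hπ : (π : ℝ) ≠ 0 := Real.pi_ne_zero
  field_simp
  ring

lemma corrMap_one : corrMap 1 = 1 := by
  simp [corrMap, Real.arccos_one]

lemma corr_cont : Continuous corrMap := by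
  unfold corrMap
  exact continuous_id.add (continuous_const.mul
    ((Real.continuous_sqrt.comp (by continuity)).sub
      (continuous_id.mul Real.continuous_arccos)))

lemma corr_mono : MonotoneOn corrMap (Set.Icc (-1 : ℝ) 1) := by
  have : StrictMonoOn corrMap (Set.Icc (-1 : ℝ) 1) := by
    apply strictMonoOn_of_deriv_pos (convex_Icc _ _) corr_cont.continuousOn
    intro x hx
    rw [interior_Icc] at hx
    rw [(corr_deriv x hx).deriv]
    have hlt : Real.arccos x < π := lt_of_le_of_ne (Real.arccos_le_pi x)
      (fun h => by have := Real.arccos_eq_pi.1 h; linarith [hx.1])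
    have := Real.pi_pos
    have : Real.arccos x / π < 1 := (div_lt_one this).2 hlt
    linarith
  exact this.monotoneOn

theorem corrMap_properties :
    (∀ ρ ∈ Set.Ico (-1 : ℝ) 1, 0 < Real.sqrt (1 - ρ ^ 2) - ρ * Real.arccos ρ) ∧
    (Real.sqrt (1 - (1 : ℝ) ^ 2) - 1 * Real.arccos 1 = 0) ∧
    (∀ ρ ∈ Set.Ioo (-1 : ℝ) 1, HasDerivAt corrMap (1 - Real.arccos ρ / π) ρ) ∧
    MonotoneOn corrMap (Set.Icc (-1 : ℝ) 1) ∧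
    Set.MapsTo corrMap (Set.Icc (-1 : ℝ) 1) (Set.Icc (-1 : ℝ) 1) ∧
    (∀ ρ ∈ Set.Icc (-1 : ℝ) 1, corrMap ρ = ρ ↔ ρ = 1) := by
  have hone : Real.sqrt (1 - (1 : ℝ) ^ 2) - 1 * Real.arccos 1 = 0 := by
    simp [Real.arccos_one]
  have hπ : 0 < π := Real.pi_pos
  have hnonneg : ∀ ρ ∈ Set.Icc (-1 : ℝ) 1,
      0 ≤ Real.sqrt (1 - ρ ^ 2) - ρ * Real.arccos ρ := by
    intro ρ ⟨ha, hb⟩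
    rcases eq_or_lt_of_le hb with h | h
    · subst h; rw [hone]
    · exact (corr_pos ρ ⟨ha, h⟩).le
  refine ⟨corr_pos, hone, corr_deriv, corr_mono, ?_, ?_⟩
  · intro ρ hρ
    constructor
    · have h0 : 0 ≤ (1 / π) * (Real.sqrt (1 - ρ ^ 2) - ρ * Real.arccos ρ) :=
        mul_nonneg (by positivity) (hnonneg ρ hρ)
      have : ρ ≤ corrMap ρ := by unfold corrMap; linarith
      linarith [hρ.1]
    · calc corrMap ρ ≤ corrMap 1 := corr_mono hρ (by constructor <;> norm_num) hρ.2
        _ = 1 := corrMap_one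
  · intro ρ hρ
    constructor
    · intro h
      by_contra hne
      have hlt : ρ < 1 := lt_of_le_of_ne hρ.2 hne
      have hpos := corr_pos ρ ⟨hρ.1, hlt⟩
      have : corrMap ρ = ρ + (1 / π) * (Real.sqrt (1 - ρ ^ 2) - ρ * Real.arccos ρ) := rfl
      nlinarith [mul_pos (by positivity : (0:ℝ) < 1 / π) hpos]
    · intro h; subst h; exact corrMap_one
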